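/- arXiv:1807.09706 — 3 statements merged into one kernel-verified Lean document; each statement's English description precedes it below -/
import Mathlib

section
/- Let f : ℝ → ℝ be even and quasiconvex, and suppose the range of f is a finite set {u₀ < u₁ < ⋯ < u_m}. For i ∈ {0,…,m} define k⁽ⁱ⁾ = inf { e ∈ [0,∞) : f(e) = u_i } and set k⁽ᵐ⁺¹⁾ = ∞. Then k⁽⁰⁾ ≤ k⁽¹⁾ ≤ ⋯ ≤ k⁽ᵐ⁾, and for every i ∈ {0,…,m} and every e ∈ ℝ with k⁽ⁱ⁾ < |e| < k⁽ⁱ⁺¹⁾, one has f(e) = u_i. -/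
/-!
An even quasiconvex function is nondecreasing in `|x|`: `x` lies on the segment from `-|y|`
to `|y|` whenever `|x| ≤ |y|`, and both endpoints are in the sublevel set of `f y`. On `[0, ∞)`
the infimum of the level set of a value `b` then behaves as a generalised inverse of `f`:
it is `≤ x` as soon as `b ≤ f x`, and `b ≤ f x` as soon as it is `< x`. Applied to the value
`f |e| = u j`, these two facts pin `j` down to `i` when `k i < |e| < k (i + 1)`.
-/

open Set

theorem Function.Even.apply_abs {β : Type*} {f : ℝ → β} (hf : Function.Even f) (x : ℝ) : f |x| = f x := by
  rcases abs_choice x with h | h <;> rw [h]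
  exact hf x

theorem QuasiconvexOn.monotoneOn_Ici_zero_of_even {β : Type*} [Preorder β] {f : ℝ → β}
    (hqc : QuasiconvexOn ℝ univ f) (heven : Function.Even f) : MonotoneOn f (Ici 0) := by
  intro x hx y _ hxy
  have hseg : x ∈ segment ℝ (-y) y := by
    rw [segment_eq_Icc (by linarith [mem_Ici.mp hx])]
    exact ⟨by linarith [mem_Ici.mp hx], hxy⟩
  exact ((hqc (f y)).segment_subset ⟨trivial, (heven y).le⟩ ⟨trivial, le_rfl⟩ hseg).2

section LevelSetInf

variable {α β : Type*} [ConditionallyCompleteLinearOrder α] [PartialOrder β]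
  {f : α → β} {a x : α} {b : β}

theorem MonotoneOn.csInf_levelSet_le (hf : MonotoneOn f (Ici a))
    (hne : {e | a ≤ e ∧ f e = b}.Nonempty) (hx : a ≤ x) (hb : b ≤ f x) :
    sInf {e | a ≤ e ∧ f e = b} ≤ x := by
  obtain ⟨e, he⟩ := hne
  rcases le_or_gt e x with hex | hxe
  · exact (csInf_le ⟨a, fun _ h => h.1⟩ he).trans hex
  · have hfx : f x = b := le_antisymm (he.2 ▸ hf hx he.1 hxe.le) hb
    exact csInf_le ⟨a, fun _ h => h.1⟩ ⟨hx, hfx⟩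

theorem MonotoneOn.le_apply_of_csInf_levelSet_lt (hf : MonotoneOn f (Ici a))
    (hne : {e | a ≤ e ∧ f e = b}.Nonempty) (hx : sInf {e | a ≤ e ∧ f e = b} < x) :
    b ≤ f x := by
  obtain ⟨e, he, hex⟩ := exists_lt_of_csInf_lt hne hx
  exact he.2 ▸ hf he.1 (he.1.trans hex.le) hex.le

theorem MonotoneOn.csInf_levelSet_mono (hf : MonotoneOn f (Ici a)) {b' : β}
    (hne : {e | a ≤ e ∧ f e = b}.Nonempty) (hne' : {e | a ≤ e ∧ f e = b'}.Nonempty)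
    (hbb' : b ≤ b') : sInf {e | a ≤ e ∧ f e = b} ≤ sInf {e | a ≤ e ∧ f e = b'} :=
  le_csInf hne' fun _ he => hf.csInf_levelSet_le hne he.1 (hbb'.trans he.2.ge)

end LevelSetInf

/-- An even quasiconvex function taking finitely many values `u 0 < ⋯ < u m` is
threshold based: with `k i = inf {e ≥ 0 : f e = u i}` (and `k (m+1) = ∞`
treated by making the upper constraint vacuous at `i = m`), the thresholds are
nondecreasing and `f e = u i` whenever `k i < |e| < k (i+1)`. -/
theorem sqc_finite_range_threshold (f : ℝ → ℝ)
    (heven : ∀ x : ℝ, f (-x) = f x)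
    (hqc : QuasiconvexOn ℝ Set.univ f)
    (m : ℕ) (u : ℕ → ℝ)
    (hu : ∀ i j : ℕ, i < j → j ≤ m → u i < u j)
    (hrange : Set.range f = u '' {i : ℕ | i ≤ m})
    (k : ℕ → ℝ)
    (hk : ∀ i ≤ m, k i = sInf {e : ℝ | 0 ≤ e ∧ f e = u i}) :
    (∀ i j : ℕ, i ≤ j → j ≤ m → k i ≤ k j) ∧
      (∀ i ≤ m, ∀ e : ℝ, k i < |e| → (i < m → |e| < k (i + 1)) → f e = u i) := by
  have hmono := hqc.monotoneOn_Ici_zero_of_even heven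
  have hu' : StrictMonoOn u (Iic m) := fun i hi j hj hij => hu i j hij hj
  have hne : ∀ i ≤ m, {e : ℝ | 0 ≤ e ∧ f e = u i}.Nonempty := by
    intro i hi
    obtain ⟨x, hx⟩ : u i ∈ range f := hrange ▸ mem_image_of_mem u hi
    exact ⟨|x|, abs_nonneg x, Function.Even.apply_abs heven x ▸ hx⟩
  refine ⟨fun i j hij hj => ?_, fun i hi e hki hki' => ?_⟩
  · rw [hk i (hij.trans hj), hk j hj]
    exact hmono.csInf_levelSet_mono (hne i (hij.trans hj)) (hne j hj)
      ((hu'.le_iff_le (hij.trans hj) hj).mpr hij)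
  · obtain ⟨j, hj, hfj⟩ : f |e| ∈ u '' Iic m := hrange ▸ mem_range_self |e|
    have hij : i ≤ j := (hu'.le_iff_le hi hj).mp <|
      hfj ▸ hmono.le_apply_of_csInf_levelSet_lt (hne i hi) (hk i hi ▸ hki)
    obtain rfl | hij := hij.eq_or_lt
    · rw [← Function.Even.apply_abs heven, hfj]
    · have him : i < m := hij.trans_le hj
      refine absurd (hki' him) (not_lt.mpr ?_)
      rw [hk (i + 1) him]
      exact hmono.csInf_levelSet_le (hne (i + 1) him) (abs_nonneg e)
        (hfj ▸ (hu'.le_iff_le him hj).mpr hij)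
end

section
/- Consider the finite-horizon dynamic program defined in the context, and assume in addition that the channel transition matrix Q is stochastically monotone (for all i ≥ j and every ℓ, Σ_{k > ℓ} Q_{ik} ≥ Σ_{k > ℓ} Q_{jk}) and that p(s,u) is nonincreasing in the channel state s for each fixed power level u. Then for every t ∈ {0, 1, …, T+1} and every e ∈ ℝ, the value function J_t(e, s) is nonincreasing in s. -/
/-!
Backward induction on `t`, with the invariant that `J t · s` is measurable, bounded, even and
nondecreasing in `|e|`, and that `J t e ·` is nonincreasing. Regrouped, `H̄_t(e, s, u)` is `λ u`
plus the `Q s ·`-average over `s'` of `(1 - p s' u) A s' + p s' u (d e + B e s')`, where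
`A s' = ∫ J_{t+1}(w, s') μ` and `B e s' = ∫ J_{t+1}(a e + w, s') μ`. Both are nonincreasing in `s'`,
and `A ≤ B e`: for `g` even and nondecreasing in `|x|` and `μ` symmetric unimodal,
`∫ g (c + w) μ w` is nondecreasing in `|c|`, because the reflection `w ↦ -(c₁ + c₂) - w` turns the
difference of the two integrals into half the integral of a product of two factors of equal sign.
So the averaged quantity is nonincreasing in `s'` since `p` is, stochastic monotonicity of `Q`
(Abel summation) carries this over to `s`, and the minimum over `u` preserves every property.
-/

open MeasureTheory

namespace Fin

variable {R : Type*} [CommRing R] [PartialOrder R] [IsOrderedRing R]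

theorem sum_mul_nonneg_of_tail_sum_nonneg {n : ℕ} {x g : Fin n → R}
    (hx : ∀ ℓ, 0 ≤ ∑ k with ℓ ≤ k, x k) (hg : Monotone g) (hg₀ : ∀ k, 0 ≤ g k) :
    0 ≤ ∑ k, x k * g k := by
  induction n with
  | zero => simp
  | succ m ih =>
    have htail (ℓ : Fin m) : ∑ k with ℓ ≤ k, x k.succ = ∑ k with ℓ.succ ≤ k, x k := by
      simp [Finset.sum_filter, Fin.sum_univ_succ]
    have hrest : 0 ≤ ∑ k : Fin m, x k.succ * (g k.succ - g 0) :=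
      ih (fun ℓ => htail ℓ ▸ hx ℓ.succ) (fun i j hij => by simpa using hg (succ_le_succ_iff.2 hij))
        (fun k => sub_nonneg.2 (hg (zero_le _)))
    calc 0 ≤ g 0 * ∑ k, x k + ∑ k : Fin m, x k.succ * (g k.succ - g 0) :=
          add_nonneg (mul_nonneg (hg₀ 0) (by simpa using hx 0)) hrest
      _ = ∑ k, x k * g k := by
        simp only [Fin.sum_univ_succ, mul_sub, Finset.sum_sub_distrib, ← Finset.sum_mul]
        ring

theorem sum_mul_le_sum_mul_of_tail_sum_le {n : ℕ} {q q' f : Fin n → R}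
    (htail : ∀ ℓ, ∑ k with ℓ ≤ k, q' k ≤ ∑ k with ℓ ≤ k, q k)
    (hsum : ∑ k, q k = ∑ k, q' k) (hf : Antitone f) :
    ∑ k, q k * f k ≤ ∑ k, q' k * f k := by
  cases n with
  | zero => simp
  | succ m =>
    have key := sum_mul_nonneg_of_tail_sum_nonneg (x := q - q') (g := fun k => f 0 - f k)
      (fun ℓ => by simpa [Finset.sum_sub_distrib] using htail ℓ)
      (fun i j hij => sub_le_sub_left (hf hij) _) (fun k => sub_nonneg.2 (hf (zero_le k)))
    simpa only [Pi.sub_apply, sub_mul, mul_sub, Finset.sum_sub_distrib, ← Finset.sum_mul, hsum,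
      sub_self, zero_sub, neg_sub, sub_nonneg] using key

end Fin

theorem Finset.abs_inf'_le {ι α : Type*} [AddCommGroup α] [LinearOrder α] [IsOrderedAddMonoid α]
    {s : Finset ι} (hs : s.Nonempty) {f : ι → α} {K : α} (h : ∀ i ∈ s, |f i| ≤ K) :
    |s.inf' hs f| ≤ K := by
  obtain ⟨i, hi⟩ := hs
  exact abs_le.2 ⟨Finset.le_inf' _ _ fun j hj => (abs_le.1 (h j hj)).1,
    (Finset.inf'_le f hi).trans (abs_le.1 (h i hi)).2⟩

theorem Antitone.one_sub_mul_add_mul {ι : Type*} [Preorder ι] {p A D : ι → ℝ} (hp : Antitone p)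
    (hp01 : ∀ i, p i ∈ Set.Icc 0 1) (hA : Antitone A) (hD : Antitone D) (hAD : ∀ i, A i ≤ D i) :
    Antitone fun i => (1 - p i) * A i + p i * D i := by
  intro i j hij
  obtain ⟨hpj₀, hpj₁⟩ := hp01 j
  calc (1 - p j) * A j + p j * D j ≤ (1 - p j) * A i + p j * D i :=
        add_le_add (mul_le_mul_of_nonneg_left (hA hij) (by linarith))
          (mul_le_mul_of_nonneg_left (hD hij) hpj₀)
    _ ≤ (1 - p i) * A i + p i * D i := by nlinarith [hp hij, hAD i]

def AbsMonotone (g : ℝ → ℝ) : Prop := ∀ ⦃x y : ℝ⦄, |x| ≤ |y| → g x ≤ g y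

def AbsAntitone (g : ℝ → ℝ) : Prop := ∀ ⦃x y : ℝ⦄, |x| ≤ |y| → g y ≤ g x

theorem AbsMonotone.apply_neg {g : ℝ → ℝ} (hg : AbsMonotone g) (x : ℝ) : g (-x) = g x :=
  le_antisymm (hg (abs_neg x).le) (hg (abs_neg x).ge)

theorem AbsAntitone.apply_neg {g : ℝ → ℝ} (hg : AbsAntitone g) (x : ℝ) : g (-x) = g x :=
  le_antisymm (hg (abs_neg x).ge) (hg (abs_neg x).le)

theorem absAntitone_of_even_of_antitoneOn {μ : ℝ → ℝ} (heven : ∀ x, μ (-x) = μ x)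
    (hmono : AntitoneOn μ (Set.Ici 0)) : AbsAntitone μ := by
  have habs (x : ℝ) : μ |x| = μ x := by rcases abs_choice x with h | h <;> simp [h, heven]
  intro x y hxy
  simpa only [habs] using hmono (abs_nonneg x) (abs_nonneg y) hxy

theorem QuasiconvexOn.absMonotone {d : ℝ → ℝ} (hd : QuasiconvexOn ℝ Set.univ d)
    (heven : ∀ x, d (-x) = d x) : AbsMonotone d := by
  intro x y hxy
  have hseg : x ∈ segment ℝ (-y) y := by
    rw [segment_eq_uIcc, Set.mem_uIcc]
    have := abs_le.1 hxy
    rcases abs_choice y with h | h <;> rw [h] at this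
    · exact Or.inl this
    · exact Or.inr ⟨by linarith, this.2⟩
  exact ((hd (d y)).segment_subset ⟨trivial, (heven y).le⟩ ⟨trivial, le_rfl⟩ hseg).2

theorem abs_add_le_abs_add_or {c₁ c₂ : ℝ} (hc : |c₁| ≤ |c₂|) (w : ℝ) :
    (|c₁ + w| ≤ |c₂ + w| ∧ |w| ≤ |w + (c₁ + c₂)|) ∨
      (|c₂ + w| ≤ |c₁ + w| ∧ |w + (c₁ + c₂)| ≤ |w|) := by
  have hsigns : (0 ≤ c₂ - c₁ ∧ 0 ≤ c₁ + c₂) ∨ (c₂ - c₁ ≤ 0 ∧ c₁ + c₂ ≤ 0) := by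
    rcases abs_choice c₂ with h | h <;> rw [h] at hc <;> have := abs_le.1 hc
    exacts [Or.inl ⟨by linarith, by linarith⟩, Or.inr ⟨by linarith, by linarith⟩]
  -- `(c₂ + w)² - (c₁ + w)² = (c₂ - c₁) σ` and `(w + c₁ + c₂)² - w² = (c₁ + c₂) σ`,
  -- where `σ = c₁ + c₂ + 2 w`.
  simp only [← sq_le_sq]
  rcases hsigns with ⟨h₁, h₂⟩ | ⟨h₁, h₂⟩ <;> rcases le_total 0 (c₁ + c₂ + 2 * w) with h₃ | h₃
  exacts [Or.inl ⟨by nlinarith, by nlinarith⟩, Or.inr ⟨by nlinarith, by nlinarith⟩,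
    Or.inr ⟨by nlinarith, by nlinarith⟩, Or.inl ⟨by nlinarith, by nlinarith⟩]

theorem comp_add_mul_shift_eq_reflect_of_even {g μ : ℝ → ℝ} (hg : ∀ x, g (-x) = g x)
    (hμ : ∀ x, μ (-x) = μ x) (c c' : ℝ) :
    (fun w => g (c' + w) * μ (w + (c + c'))) =
      fun w => g (c + (-(c + c') - w)) * μ (-(c + c') - w) := by
  ext w
  rw [← hg (c' + w), ← hμ (w + (c + c'))]
  ring_nf

theorem integral_comp_add_mul_le_of_abs_le {g μ : ℝ → ℝ} (hg : AbsMonotone g) (hμ : AbsAntitone μ)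
    {c₁ c₂ : ℝ} (hc : |c₁| ≤ |c₂|) (h₁ : Integrable fun w => g (c₁ + w) * μ w)
    (h₂ : Integrable fun w => g (c₂ + w) * μ w) :
    ∫ w, g (c₁ + w) * μ w ≤ ∫ w, g (c₂ + w) * μ w := by
  have hreflect := comp_add_mul_shift_eq_reflect_of_even hg.apply_neg hμ.apply_neg
  have r₁ : ∫ w, g (c₂ + w) * μ (w + (c₁ + c₂)) = ∫ w, g (c₁ + w) * μ w := by
    rw [hreflect, integral_sub_left_eq_self (fun w => g (c₁ + w) * μ w)]
  have r₂ : ∫ w, g (c₁ + w) * μ (w + (c₁ + c₂)) = ∫ w, g (c₂ + w) * μ w := by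
    rw [add_comm c₁, hreflect, integral_sub_left_eq_self (fun w => g (c₂ + w) * μ w)]
  have i₁ : Integrable fun w => g (c₂ + w) * μ (w + (c₁ + c₂)) :=
    hreflect c₁ c₂ ▸ h₁.comp_sub_left _
  have i₂ : Integrable fun w => g (c₁ + w) * μ (w + (c₁ + c₂)) := by
    rw [add_comm c₁]; exact hreflect c₂ c₁ ▸ h₂.comp_sub_left _
  have hpair : 0 ≤ ∫ w, (g (c₂ + w) - g (c₁ + w)) * (μ w - μ (w + (c₁ + c₂))) :=
    integral_nonneg fun w => by
      rcases abs_add_le_abs_add_or hc w with ⟨hgw, hμw⟩ | ⟨hgw, hμw⟩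
      · exact mul_nonneg (sub_nonneg.2 (hg hgw)) (sub_nonneg.2 (hμ hμw))
      · exact mul_nonneg_of_nonpos_of_nonpos (sub_nonpos.2 (hg hgw)) (sub_nonpos.2 (hμ hμw))
  have hsplit : ∫ w, (g (c₂ + w) - g (c₁ + w)) * (μ w - μ (w + (c₁ + c₂))) =
      ((∫ w, g (c₂ + w) * μ w) - ∫ w, g (c₁ + w) * μ w) +
        ((∫ w, g (c₁ + w) * μ (w + (c₁ + c₂))) - ∫ w, g (c₂ + w) * μ (w + (c₁ + c₂))) := by
    rw [← integral_sub h₂ h₁, ← integral_sub i₂ i₁,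
      ← integral_add (f := fun w => g (c₂ + w) * μ w - g (c₁ + w) * μ w)
        (g := fun w => g (c₁ + w) * μ (w + (c₁ + c₂)) - g (c₂ + w) * μ (w + (c₁ + c₂)))
        (h₂.sub h₁) (i₂.sub i₁)]
    congr 1 with w
    ring
  linarith

theorem integrable_comp_add_mul {f μ : ℝ → ℝ} (hf : Measurable f) {C : ℝ} (hC : ∀ x, |f x| ≤ C)
    (hμ : Integrable μ) (c : ℝ) : Integrable fun w => f (c + w) * μ w :=
  hμ.bdd_mul (hf.comp (measurable_const_add c)).aestronglyMeasurable (ae_of_all _ fun _ => hC _)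

theorem abs_integral_mul_le {f μ : ℝ → ℝ} {C : ℝ} (hC : ∀ x, |f x| ≤ C) (hμ₀ : ∀ x, 0 ≤ μ x)
    (hμ₁ : ∫ x, μ x = 1) : |∫ w, f w * μ w| ≤ C := by
  have hμ : Integrable μ := .of_integral_ne_zero (by simp [hμ₁])
  calc |∫ w, f w * μ w| ≤ ∫ w, C * μ w :=
        norm_integral_le_of_norm_le (f := fun w => f w * μ w) (hμ.const_mul C)
          (ae_of_all _ fun w => by
            rw [Real.norm_eq_abs, abs_mul, abs_of_nonneg (hμ₀ w)]
            exact mul_le_mul_of_nonneg_right (hC w) (hμ₀ w))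
    _ = C := by rw [integral_const_mul, hμ₁, mul_one]

theorem abs_sum_mul_le_of_abs_le {ι : Type*} {s : Finset ι} {q f : ι → ℝ} {K : ℝ}
    (hq₀ : ∀ i ∈ s, 0 ≤ q i) (hq₁ : ∑ i ∈ s, q i = 1) (hf : ∀ i ∈ s, |f i| ≤ K) :
    |∑ i ∈ s, q i * f i| ≤ K :=
  calc |∑ i ∈ s, q i * f i| ≤ ∑ i ∈ s, q i * K :=
        (Finset.abs_sum_le_sum_abs _ _).trans <| Finset.sum_le_sum fun i hi => by
          rw [abs_mul, abs_of_nonneg (hq₀ i hi)]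
          exact mul_le_mul_of_nonneg_left (hf i hi) (hq₀ i hi)
    _ = K := by rw [← Finset.sum_mul, hq₁, one_mul]

theorem measurable_integral_comp_mul_add_mul {f μ : ℝ → ℝ} (hf : Measurable f) (hμ : Measurable μ)
    (a : ℝ) : Measurable fun e => ∫ w, f (a * e + w) * μ w :=
  have hjoint : Measurable fun q : ℝ × ℝ => f (a * q.1 + q.2) * μ q.2 :=
    (hf.comp ((measurable_fst.const_mul a).add measurable_snd)).mul (hμ.comp measurable_snd)
  hjoint.stronglyMeasurable.integral_prod_right'.measurable

noncomputable section

variable {n : ℕ}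

def qValue (a : ℝ) (μ d lam : ℝ → ℝ) (p : Fin n → ℝ → ℝ) (Q : Fin n → Fin n → ℝ)
    (V : ℝ → Fin n → ℝ) (e : ℝ) (s : Fin n) (u : ℝ) : ℝ :=
  lam u + ∑ s', Q s s' *
    ((1 - p s' u) * (∫ w, V w s' * μ w) + p s' u * (d e + ∫ w, V (a * e + w) s' * μ w))

def bellman (a : ℝ) (μ d lam : ℝ → ℝ) (p : Fin n → ℝ → ℝ) (Q : Fin n → Fin n → ℝ)
    (U : Finset ℝ) (hU : U.Nonempty) (V : ℝ → Fin n → ℝ) (e : ℝ) (s : Fin n) : ℝ :=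
  U.inf' hU (qValue a μ d lam p Q V e s)

theorem qValue_eq (a : ℝ) (μ d lam : ℝ → ℝ) (p : Fin n → ℝ → ℝ) (Q : Fin n → Fin n → ℝ)
    (V : ℝ → Fin n → ℝ) (e : ℝ) (s : Fin n) (u : ℝ) :
    qValue a μ d lam p Q V e s u =
      lam u + (∑ s', Q s s' * p s' u) * d e + ∑ s', Q s s' *
        ((1 - p s' u) * (∫ w, V w s' * μ w) + p s' u * ∫ w, V (a * e + w) s' * μ w) := by
  simp only [qValue, Finset.sum_mul, add_assoc, ← Finset.sum_add_distrib]
  congr 1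
  exact Finset.sum_congr rfl fun s' _ => by ring

structure ValueInvariant (V : ℝ → Fin n → ℝ) : Prop where
  measurable : ∀ s, Measurable fun e => V e s
  bounded : ∃ C, ∀ e s, |V e s| ≤ C
  absMonotone : ∀ s, AbsMonotone fun e => V e s
  antitone : ∀ e, Antitone (V e)

variable {a : ℝ} {μ d lam : ℝ → ℝ} {p : Fin n → ℝ → ℝ} {Q : Fin n → Fin n → ℝ}
  {V : ℝ → Fin n → ℝ}

theorem abs_qValue_le {C Cd : ℝ} (hC : ∀ e s, |V e s| ≤ C) (hμ₀ : ∀ x, 0 ≤ μ x)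
    (hμ₁ : ∫ x, μ x = 1) (hd₀ : ∀ x, 0 ≤ d x) (hdC : ∀ x, d x ≤ Cd) {u : ℝ}
    (hp : ∀ s, p s u ∈ Set.Icc 0 1) (hQ₀ : ∀ i j, 0 ≤ Q i j) (hQ₁ : ∀ i, ∑ j, Q i j = 1)
    (e : ℝ) (s : Fin n) : |qValue a μ d lam p Q V e s u| ≤ |lam u| + (Cd + C) := by
  refine (abs_add_le _ _).trans (add_le_add_right ?_ _)
  refine abs_sum_mul_le_of_abs_le (fun s' _ => hQ₀ s s') (hQ₁ s) fun s' _ => ?_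
  obtain ⟨hp₀, hp₁⟩ := hp s'
  have hA := abs_le.1 (abs_integral_mul_le (fun x => hC x s') hμ₀ hμ₁)
  have hB := abs_le.1 (abs_integral_mul_le (f := fun w => V (a * e + w) s') (fun x => hC _ s')
    hμ₀ hμ₁)
  have := hd₀ e
  have := hdC e
  rw [abs_le]
  constructor <;> nlinarith

namespace ValueInvariant

theorem integrable (hV : ValueInvariant V) (hμ : Integrable μ) (c : ℝ) (s : Fin n) :
    Integrable fun w => V (c + w) s * μ w :=
  have ⟨_, hC⟩ := hV.bounded
  integrable_comp_add_mul (hV.measurable s) (fun x => hC x s) hμ c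

theorem integral_comp_add_mul_le (hV : ValueInvariant V) (hμint : Integrable μ)
    (hμ : AbsAntitone μ) {c₁ c₂ : ℝ} (hc : |c₁| ≤ |c₂|) (s : Fin n) :
    ∫ w, V (c₁ + w) s * μ w ≤ ∫ w, V (c₂ + w) s * μ w :=
  integral_comp_add_mul_le_of_abs_le (hV.absMonotone s) hμ hc (hV.integrable hμint c₁ s)
    (hV.integrable hμint c₂ s)

theorem antitone_integral_comp_add_mul (hV : ValueInvariant V) (hμint : Integrable μ)
    (hμ₀ : ∀ x, 0 ≤ μ x) (c : ℝ) : Antitone fun s => ∫ w, V (c + w) s * μ w :=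
  fun _ _ hs => integral_mono (hV.integrable hμint c _) (hV.integrable hμint c _)
    fun w => mul_le_mul_of_nonneg_right (hV.antitone _ hs) (hμ₀ w)

theorem measurable_qValue (hV : ValueInvariant V) (hμ : Measurable μ) (hd : Measurable d)
    (s : Fin n) (u : ℝ) : Measurable fun e => qValue a μ d lam p Q V e s u := by
  have hB := fun s' => measurable_integral_comp_mul_add_mul (hV.measurable s') hμ a
  unfold qValue
  fun_prop

theorem absMonotone_qValue (hV : ValueInvariant V) (hμint : Integrable μ) (hμ : AbsAntitone μ)
    (hd : AbsMonotone d) {u : ℝ} (hp₀ : ∀ s, 0 ≤ p s u) (hQ₀ : ∀ i j, 0 ≤ Q i j) (s : Fin n) :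
    AbsMonotone fun e => qValue a μ d lam p Q V e s u := by
  intro x y hxy
  have hB (s' : Fin n) : ∫ w, V (a * x + w) s' * μ w ≤ ∫ w, V (a * y + w) s' * μ w :=
    hV.integral_comp_add_mul_le hμint hμ
      (by simpa only [abs_mul] using mul_le_mul_of_nonneg_left hxy (abs_nonneg a)) s'
  exact add_le_add_right (Finset.sum_le_sum fun s' _ => mul_le_mul_of_nonneg_left
    (add_le_add_right (mul_le_mul_of_nonneg_left (add_le_add (hd hxy) (hB s')) (hp₀ s')) _)
    (hQ₀ s s')) _

theorem antitone_qValue (hV : ValueInvariant V) (hμint : Integrable μ) (hμ₀ : ∀ x, 0 ≤ μ x)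
    (hμ : AbsAntitone μ) (hd₀ : ∀ x, 0 ≤ d x) {u : ℝ} (hp : ∀ s, p s u ∈ Set.Icc 0 1)
    (hps : Antitone fun s => p s u) (hQ₁ : ∀ i, ∑ j, Q i j = 1)
    (hQmono : ∀ i j, j ≤ i → ∀ ℓ, ∑ k with ℓ ≤ k, Q j k ≤ ∑ k with ℓ ≤ k, Q i k) (e : ℝ) :
    Antitone fun s => qValue a μ d lam p Q V e s u := by
  have hA : Antitone fun s' => ∫ w, V w s' * μ w := by
    simpa only [zero_add] using hV.antitone_integral_comp_add_mul hμint hμ₀ 0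
  have hB := hV.antitone_integral_comp_add_mul hμint hμ₀ (a * e)
  have hAB (s' : Fin n) : ∫ w, V w s' * μ w ≤ d e + ∫ w, V (a * e + w) s' * μ w := by
    have := hV.integral_comp_add_mul_le hμint hμ (c₁ := 0) (c₂ := a * e)
      (by simpa using abs_nonneg (a * e)) s'
    simp only [zero_add] at this
    linarith [hd₀ e]
  intro s₁ s₂ hs
  exact add_le_add_right (Fin.sum_mul_le_sum_mul_of_tail_sum_le (hQmono s₂ s₁ hs)
    ((hQ₁ s₂).trans (hQ₁ s₁).symm)
    (hps.one_sub_mul_add_mul hp hA (fun _ _ h => add_le_add_right (hB h) _) hAB)) _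

theorem bellman (hV : ValueInvariant V) (hμmeas : Measurable μ) (hμ₀ : ∀ x, 0 ≤ μ x)
    (hμ₁ : ∫ x, μ x = 1) (hμ : AbsAntitone μ) (hdmeas : Measurable d) (hd₀ : ∀ x, 0 ≤ d x)
    (hdbd : ∃ C, ∀ x, d x ≤ C) (hd : AbsMonotone d) {U : Finset ℝ} (hU : U.Nonempty)
    (hp : ∀ s, ∀ u ∈ U, p s u ∈ Set.Icc 0 1) (hps : ∀ u ∈ U, Antitone fun s => p s u)
    (hQ₀ : ∀ i j, 0 ≤ Q i j) (hQ₁ : ∀ i, ∑ j, Q i j = 1)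
    (hQmono : ∀ i j, j ≤ i → ∀ ℓ, ∑ k with ℓ ≤ k, Q j k ≤ ∑ k with ℓ ≤ k, Q i k) :
    ValueInvariant (bellman a μ d lam p Q U hU V) := by
  have hμint : Integrable μ := .of_integral_ne_zero (by simp [hμ₁])
  obtain ⟨C, hC⟩ := hV.bounded
  obtain ⟨Cd, hCd⟩ := hdbd
  refine ⟨fun s => ?_, ⟨U.sup' hU (|lam ·|) + (Cd + C), fun e s => ?_⟩,
    fun s _ _ hxy => ?_, fun e _ _ hs => ?_⟩
  · convert Finset.inf'_induction hU (fun u e => qValue a μ d lam p Q V e s u) (p := Measurable)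
      (fun _ h₁ _ h₂ => h₁.inf h₂) fun u _ => hV.measurable_qValue hμmeas hdmeas s u using 1
    ext e
    simp only [_root_.bellman, Finset.inf'_apply]
  · refine Finset.abs_inf'_le hU fun u hu => ?_
    exact (abs_qValue_le hC hμ₀ hμ₁ hd₀ hCd (fun s => hp s u hu) hQ₀ hQ₁ e s).trans
      (add_le_add_left (Finset.le_sup' (|lam ·|) hu) _)
  · exact Finset.inf'_mono_fun fun u hu =>
      hV.absMonotone_qValue hμint hμ hd (fun s => (hp s u hu).1) hQ₀ s hxy
  · exact Finset.inf'_mono_fun fun u hu =>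
      hV.antitone_qValue hμint hμ₀ hμ hd₀ (fun s => hp s u hu) (hps u hu) hQ₁ hQmono e hs

end ValueInvariant

end

theorem value_function_antitone_in_channel_state_general
    (T n : ℕ) (a : ℝ)
    (U : Finset ℝ) (hU0 : (0 : ℝ) ∈ U)
    (μ : ℝ → ℝ) (hμmeas : Measurable μ) (hμnn : ∀ x : ℝ, 0 ≤ μ x)
    (hμone : ∫ x : ℝ, μ x = 1)
    (hμeven : ∀ x : ℝ, μ (-x) = μ x)
    (hμmono : AntitoneOn μ (Set.Ici (0 : ℝ)))
    (d : ℝ → ℝ) (hdmeas : Measurable d) (hdnn : ∀ x : ℝ, 0 ≤ d x)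
    (hdbd : ∃ C : ℝ, ∀ x : ℝ, d x ≤ C)
    (hdeven : ∀ x : ℝ, d (-x) = d x)
    (hdqc : QuasiconvexOn ℝ Set.univ d)
    (lam : ℝ → ℝ)
    (p : Fin n → ℝ → ℝ)
    (hp01 : ∀ s : Fin n, ∀ u ∈ U, p s u ∈ Set.Icc (0 : ℝ) 1)
    (Q : Fin n → Fin n → ℝ)
    (hQnn : ∀ i j : Fin n, 0 ≤ Q i j)
    (hQrow : ∀ i : Fin n, ∑ j : Fin n, Q i j = 1)
    (hQmono : ∀ i j : Fin n, j ≤ i → ∀ ℓ : Fin n,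
      ∑ k ∈ Finset.univ.filter (fun k : Fin n => ℓ ≤ k), Q j k ≤
        ∑ k ∈ Finset.univ.filter (fun k : Fin n => ℓ ≤ k), Q i k)
    (hps : ∀ u ∈ U, ∀ s s' : Fin n, s ≤ s' → p s' u ≤ p s u)
    (J : ℕ → ℝ → Fin n → ℝ)
    (Hbar : ℕ → ℝ → Fin n → ℝ → ℝ)
    (hHbar : ∀ (t : ℕ) (e : ℝ) (s : Fin n) (u : ℝ),
      Hbar t e s u =
        lam u + (∑ s' : Fin n, Q s s' * p s' u) * d e +
          ∑ s' : Fin n, Q s s' *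
            ((1 - p s' u) * (∫ w : ℝ, J (t + 1) w s' * μ w) +
              p s' u * (∫ w : ℝ, J (t + 1) (a * e + w) s' * μ w)))
    (hJT : ∀ (e : ℝ) (s : Fin n), J (T + 1) e s = 0)
    (hJrec : ∀ t ≤ T, ∀ (e : ℝ) (s : Fin n),
      J t e s = U.inf' ⟨0, hU0⟩ (Hbar t e s)) :
    ∀ t ≤ T + 1, ∀ e : ℝ, ∀ s s' : Fin n, s ≤ s' →
      J t e s' ≤ J t e s := by
  have hμ := absAntitone_of_even_of_antitoneOn hμeven hμmono
  have hd := hdqc.absMonotone hdeven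
  have hstep (t : ℕ) (ht : t < T + 1) (hV : ValueInvariant (J (t + 1))) :
      ValueInvariant (J t) := by
    have hH : Hbar t = qValue a μ d lam p Q (J (t + 1)) := by
      ext e s u
      rw [hHbar, qValue_eq]
    have hJt : J t = bellman a μ d lam p Q U ⟨0, hU0⟩ (J (t + 1)) := by
      ext e s
      rw [hJrec t (Nat.lt_succ_iff.1 ht), hH]
      rfl
    rw [hJt]
    exact hV.bellman hμmeas hμnn hμone hμ hdmeas hdnn hdbd hd ⟨0, hU0⟩ hp01
      (fun u hu _ _ h => hps u hu _ _ h) hQnn hQrow hQmono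
  have hlast : ValueInvariant (J (T + 1)) := by
    have hzero : J (T + 1) = fun _ _ => 0 := funext₂ hJT
    rw [hzero]
    exact ⟨fun _ => measurable_const, ⟨0, by simp⟩, fun _ _ _ _ => le_rfl, fun _ _ _ _ => le_rfl⟩
  intro t ht e s s' hss
  exact (Nat.decreasingInduction (motive := fun t _ => ValueInvariant (J t)) hstep hlast ht
    |>.antitone e hss)

/-- Part 2 of Theorem 4 of the paper: if in addition the channel transition
matrix `Q` is stochastically monotone and the drop probability `p s u` is
nonincreasing in the channel state `s`, then the value function `J t e s` of
the finite-horizon dynamic program is nonincreasing in `s`. -/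
theorem value_function_antitone_in_channel_state
    (T n : ℕ) (a : ℝ)
    (U : Finset ℝ) (hU0 : (0 : ℝ) ∈ U) (hUnn : ∀ u ∈ U, (0 : ℝ) ≤ u)
    (μ : ℝ → ℝ) (hμmeas : Measurable μ) (hμnn : ∀ x : ℝ, 0 ≤ μ x)
    (hμone : ∫ x : ℝ, μ x = 1)
    (hμeven : ∀ x : ℝ, μ (-x) = μ x)
    (hμmono : AntitoneOn μ (Set.Ici (0 : ℝ)))
    (d : ℝ → ℝ) (hdmeas : Measurable d) (hdnn : ∀ x : ℝ, 0 ≤ d x)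
    (hdbd : ∃ C : ℝ, ∀ x : ℝ, d x ≤ C)
    (hdeven : ∀ x : ℝ, d (-x) = d x)
    (hdqc : QuasiconvexOn ℝ Set.univ d) (hd0 : d 0 = 0)
    (lam : ℝ → ℝ) (hlam_mono : MonotoneOn lam U) (hlam0 : lam 0 = 0)
    (hlamnn : ∀ u ∈ U, 0 ≤ lam u)
    (p : Fin n → ℝ → ℝ)
    (hp0 : ∀ s : Fin n, p s 0 = 1)
    (hp01 : ∀ s : Fin n, ∀ u ∈ U, p s u ∈ Set.Icc (0 : ℝ) 1)
    (hpu : ∀ s : Fin n, ∀ u ∈ U, ∀ v ∈ U, u ≤ v → p s v ≤ p s u)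
    (Q : Fin n → Fin n → ℝ)
    (hQnn : ∀ i j : Fin n, 0 ≤ Q i j)
    (hQrow : ∀ i : Fin n, ∑ j : Fin n, Q i j = 1)
    (hQmono : ∀ i j : Fin n, j ≤ i → ∀ ℓ : Fin n,
      ∑ k ∈ Finset.univ.filter (fun k : Fin n => ℓ ≤ k), Q j k ≤
        ∑ k ∈ Finset.univ.filter (fun k : Fin n => ℓ ≤ k), Q i k)
    (hps : ∀ u ∈ U, ∀ s s' : Fin n, s ≤ s' → p s' u ≤ p s u)
    (J : ℕ → ℝ → Fin n → ℝ)
    (Hbar : ℕ → ℝ → Fin n → ℝ → ℝ)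
    (hHbar : ∀ (t : ℕ) (e : ℝ) (s : Fin n) (u : ℝ),
      Hbar t e s u =
        lam u + (∑ s' : Fin n, Q s s' * p s' u) * d e +
          ∑ s' : Fin n, Q s s' *
            ((1 - p s' u) * (∫ w : ℝ, J (t + 1) w s' * μ w) +
              p s' u * (∫ w : ℝ, J (t + 1) (a * e + w) s' * μ w)))
    (hJT : ∀ (e : ℝ) (s : Fin n), J (T + 1) e s = 0)
    (hJrec : ∀ t ≤ T, ∀ (e : ℝ) (s : Fin n),
      J t e s = U.inf' ⟨0, hU0⟩ (Hbar t e s)) :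
    ∀ t ≤ T + 1, ∀ e : ℝ, ∀ s s' : Fin n, s ≤ s' →
      J t e s' ≤ J t e s :=
  value_function_antitone_in_channel_state_general T n a U hU0 μ hμmeas hμnn hμone hμeven hμmono d
    hdmeas hdnn hdbd hdeven hdqc lam p hp01 Q hQnn hQrow hQmono hps J Hbar hHbar hJT hJrec
end

section
/- Let μ : ℝ → [0,∞) be Lebesgue-integrable, even, and nonincreasing on [0,∞), with cumulative distribution function 𝓜(x) = ∫_{(−∞, x]} μ(w) dw. Fix y ≥ 0 and a ∈ ℝ, and let P : ℝ → [0,1] be nonincreasing. Define M(e, u) = 1 − P(u) · ( 𝓜(y − a·e) + 𝓜(y + a·e) ) − (1 − P(u)) · 2𝓜(y). Then M(e, u) is submodular in (e, u) on [0,∞) × ℝ: for all 0 ≤ e₁ ≤ e₂ and all u₁ ≤ u₂, M(e₁, u₁) + M(e₂, u₂) ≤ M(e₁, u₂) + M(e₂, u₁). Moreover, for each fixed u, M(e, u) is nondecreasing in e on [0,∞). -/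
/-!
Write `G t = 𝓜 (y - t) + 𝓜 (y + t)`. For `0 ≤ t₁ ≤ t₂`, every point of `[y + t₁, y + t₂]` is at
least as far from the origin as its mirror image about `y ≥ 0` in `[y - t₂, y - t₁]`, so the even
unimodal density `μ` gives the left interval at least as much mass, and `G` is nonincreasing in
`|t|`. Then `M (e₁, u₂) + M (e₂, u₁) - M (e₁, u₁) - M (e₂, u₂)` equals
`(P u₁ - P u₂) * (G (a e₁) - G (a e₂))`, a product of two nonnegative factors, and
`M (e₂, u) - M (e₁, u) = P u * (G (a e₁) - G (a e₂)) ≥ 0`.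
-/

open MeasureTheory Set

lemma AntitoneOn.apply_le_of_abs_le {f : ℝ → ℝ} (heven : ∀ x, f (-x) = f x)
    (hf : AntitoneOn f (Ici 0)) {s t : ℝ} (hst : |s| ≤ |t|) : f t ≤ f s := by
  have apply_abs : ∀ x, f |x| = f x := fun x => by
    rcases abs_choice x with h | h <;> rw [h]
    exact heven x
  rw [← apply_abs s, ← apply_abs t]
  exact hf (abs_nonneg s) (abs_nonneg t) hst

section SymmetricUnimodal

variable {μ : ℝ → ℝ} (heven : ∀ x, μ (-x) = μ x) (hmono : AntitoneOn μ (Ici 0))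
  {y : ℝ} (hy : 0 ≤ y)
include heven hmono hy

lemma le_apply_two_mul_sub_of_le {x : ℝ} (hyx : y ≤ x) : μ x ≤ μ (2 * y - x) :=
  hmono.apply_le_of_abs_le heven <| by
    rw [abs_of_nonneg (hy.trans hyx), abs_le]
    constructor <;> linarith

lemma antitoneOn_integral_Iic_sub_add_integral_Iic_add (hint : Integrable μ) :
    AntitoneOn (fun t => (∫ w in Iic (y - t), μ w) + ∫ w in Iic (y + t), μ w) (Ici 0) := by
  intro t₁ ht₁ t₂ _ ht
  have right : (∫ w in Iic (y + t₂), μ w) - ∫ w in Iic (y + t₁), μ w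
      = ∫ x in (y + t₁)..(y + t₂), μ x :=
    intervalIntegral.integral_Iic_sub_Iic hint.integrableOn hint.integrableOn
  have left : (∫ w in Iic (y - t₁), μ w) - ∫ w in Iic (y - t₂), μ w
      = ∫ x in (y + t₁)..(y + t₂), μ (2 * y - x) := by
    rw [intervalIntegral.integral_Iic_sub_Iic hint.integrableOn hint.integrableOn,
      intervalIntegral.integral_comp_sub_left μ (2 * y)]
    ring_nf
  have reflect :
      (∫ x in (y + t₁)..(y + t₂), μ x) ≤ ∫ x in (y + t₁)..(y + t₂), μ (2 * y - x) :=
    intervalIntegral.integral_mono_on (by linarith) hint.intervalIntegrable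
      (hint.comp_sub_left (2 * y)).intervalIntegrable fun x hx =>
        le_apply_two_mul_sub_of_le heven hmono hy (by linarith [hx.1, mem_Ici.1 ht₁])
  dsimp only
  linarith

end SymmetricUnimodal

theorem tail_function_submodular_and_monotone_general (μ : ℝ → ℝ)
    (hint : Integrable μ)
    (heven : ∀ x : ℝ, μ (-x) = μ x)
    (hmono : AntitoneOn μ (Set.Ici (0 : ℝ)))
    (𝓜 : ℝ → ℝ) (h𝓜 : ∀ x : ℝ, 𝓜 x = ∫ w in Set.Iic x, μ w)
    (y a : ℝ) (hy : 0 ≤ y)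
    (P : ℝ → ℝ) (hP : Antitone P)
    (hP01 : ∀ u : ℝ, P u ∈ Set.Icc (0 : ℝ) 1)
    (M : ℝ → ℝ → ℝ)
    (hM : ∀ e u : ℝ,
      M e u = 1 - P u * (𝓜 (y - a * e) + 𝓜 (y + a * e)) - (1 - P u) * (2 * 𝓜 y)) :
    (∀ e₁ e₂ u₁ u₂ : ℝ, 0 ≤ e₁ → e₁ ≤ e₂ → u₁ ≤ u₂ →
        M e₁ u₁ + M e₂ u₂ ≤ M e₁ u₂ + M e₂ u₁) ∧
      (∀ u : ℝ, MonotoneOn (fun e : ℝ => M e u) (Set.Ici (0 : ℝ))) := by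
  set G := fun t => 𝓜 (y - t) + 𝓜 (y + t)
  have G_even : ∀ t, G (-t) = G t := fun t => by
    simp only [G]
    rw [sub_neg_eq_add, ← sub_eq_add_neg, add_comm]
  have G_antitoneOn : AntitoneOn G (Ici 0) := by
    simpa only [G, h𝓜] using antitoneOn_integral_Iic_sub_add_integral_Iic_add heven hmono hy hint
  have G_antitone : ∀ {e₁ e₂ : ℝ}, 0 ≤ e₁ → e₁ ≤ e₂ → G (a * e₂) ≤ G (a * e₁) :=
    fun he₁ he₁₂ =>
      G_antitoneOn.apply_le_of_abs_le G_even <| by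
        rw [abs_mul, abs_mul, abs_of_nonneg he₁, abs_of_nonneg (he₁.trans he₁₂)]
        exact mul_le_mul_of_nonneg_left he₁₂ (abs_nonneg a)
  refine ⟨fun e₁ e₂ u₁ u₂ he₁ he₁₂ hu => ?_, fun u e₁ he₁ _ _ he₁₂ => ?_⟩
  · simp only [hM]
    linear_combination mul_nonneg (sub_nonneg.2 (hP hu)) (sub_nonneg.2 (G_antitone he₁ he₁₂))
  · simp only [hM]
    linear_combination mul_le_mul_of_nonneg_left (G_antitone he₁ he₁₂) (hP01 u).1

/-- Verification of conditions (C3) and (C5) of the paper: with an integrable,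
even noise density `μ` nonincreasing on `[0,∞)` with CDF `𝓜`, `y ≥ 0`, and a
nonincreasing average drop probability `P : ℝ → [0,1]`, the tail function
`M(e,u) = 1 - P u * (𝓜 (y - a e) + 𝓜 (y + a e)) - (1 - P u) * 2 𝓜 y`
is submodular in `(e,u)` on `[0,∞) × ℝ` and nondecreasing in `e` on `[0,∞)`. -/
theorem tail_function_submodular_and_monotone (μ : ℝ → ℝ)
    (hint : Integrable μ) (hnn : ∀ x : ℝ, 0 ≤ μ x)
    (heven : ∀ x : ℝ, μ (-x) = μ x)
    (hmono : AntitoneOn μ (Set.Ici (0 : ℝ)))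
    (𝓜 : ℝ → ℝ) (h𝓜 : ∀ x : ℝ, 𝓜 x = ∫ w in Set.Iic x, μ w)
    (y a : ℝ) (hy : 0 ≤ y)
    (P : ℝ → ℝ) (hP : Antitone P)
    (hP01 : ∀ u : ℝ, P u ∈ Set.Icc (0 : ℝ) 1)
    (M : ℝ → ℝ → ℝ)
    (hM : ∀ e u : ℝ,
      M e u = 1 - P u * (𝓜 (y - a * e) + 𝓜 (y + a * e)) - (1 - P u) * (2 * 𝓜 y)) :
    (∀ e₁ e₂ u₁ u₂ : ℝ, 0 ≤ e₁ → e₁ ≤ e₂ → u₁ ≤ u₂ →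
        M e₁ u₁ + M e₂ u₂ ≤ M e₁ u₂ + M e₂ u₁) ∧
      (∀ u : ℝ, MonotoneOn (fun e : ℝ => M e u) (Set.Ici (0 : ℝ))) :=
  tail_function_submodular_and_monotone_general μ hint heven hmono 𝓜 h𝓜 y a hy P hP hP01 M hM
end
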